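/- Let d ≥ 1 be an integer, ε, δ ∈ (0,1) with δ ≤ ε, and let N be a finite δ-approximation for B_d(ε) with |N| ≥ 3. Then N(ε,d) ≤ 3·ln|N|/δ; that is, there exists a set P ⊆ [0,1]^d of cardinality at most 3·ln|N|/δ with disp(P) ≤ ε. -/

import Mathlib

open MeasureTheory Real Set ProbabilityTheory
open scoped Classical ENNReal NNReal

noncomputable section

/-- The unit cube `[0,1]^d`. -/
def cube (d : ℕ) : Set (Fin d → ℝ) := Set.univ.pi fun _ => Set.Icc 0 1

/-- Axis-parallel boxes `∏ [aᵢ, bᵢ)` with `0 ≤ aᵢ ≤ bᵢ ≤ 1`. -/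
def IsBox {d : ℕ} (B : Set (Fin d → ℝ)) : Prop :=
  ∃ a b : Fin d → ℝ, (∀ i, 0 ≤ a i ∧ a i ≤ b i ∧ b i ≤ 1) ∧
    B = Set.univ.pi fun i => Set.Ico (a i) (b i)

/-- Periodic axis-parallel boxes on the torus: in each coordinate the factor is
`(aᵢ, bᵢ)` if `aᵢ < bᵢ`, and `[0,1] \ [bᵢ, aᵢ]` if `bᵢ < aᵢ`. -/
def IsPeriodicBox {d : ℕ} (B : Set (Fin d → ℝ)) : Prop :=
  ∃ a b : Fin d → ℝ, a ∈ cube d ∧ b ∈ cube d ∧ (∀ i, a i ≠ b i) ∧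
    B = Set.univ.pi fun i =>
      if a i < b i then Set.Ioo (a i) (b i) else Set.Icc 0 1 \ Set.Icc (b i) (a i)

/-- `d`-dimensional Lebesgue volume, as a real number. -/
def vol {d : ℕ} (B : Set (Fin d → ℝ)) : ℝ := (MeasureTheory.volume B).toReal

/-- Dispersion of a point set: supremum of volumes of boxes avoiding `P`. -/
def disp {d : ℕ} (P : Set (Fin d → ℝ)) : ℝ :=
  sSup {v | ∃ B : Set (Fin d → ℝ), IsBox B ∧ B ∩ P = ∅ ∧ v = vol B}

/-- Periodic (torus) dispersion of a point set. -/
def pdisp {d : ℕ} (P : Set (Fin d → ℝ)) : ℝ :=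
  sSup {v | ∃ B : Set (Fin d → ℝ), IsPeriodicBox B ∧ B ∩ P = ∅ ∧ v = vol B}

/-- Minimal dispersion `disp*(n,d)`. -/
def dispStar (n d : ℕ) : ℝ :=
  sInf {v | ∃ P : Finset (Fin d → ℝ), ↑P ⊆ cube d ∧ P.card = n ∧ v = disp (↑P : Set (Fin d → ℝ))}

/-- Minimal periodic dispersion `disp̃*(n,d)`. -/
def pdispStar (n d : ℕ) : ℝ :=
  sInf {v | ∃ P : Finset (Fin d → ℝ), ↑P ⊆ cube d ∧ P.card = n ∧ v = pdisp (↑P : Set (Fin d → ℝ))}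

/-- Inverse of the minimal dispersion, `N(ε,d)`. -/
def invDisp (ε : ℝ) (d : ℕ) : ℕ := sInf {n : ℕ | 0 < n ∧ dispStar n d ≤ ε}

/-- A `δ`-approximation of the family of boxes of volume at least `ε`. -/
def DeltaApprox {d : ℕ} (δ ε : ℝ) (𝒩 : Set (Set (Fin d → ℝ))) : Prop :=
  (∀ A ∈ 𝒩, IsBox A) ∧
  ∀ B : Set (Fin d → ℝ), IsBox B → ε ≤ vol B → ∃ B₀ ∈ 𝒩, B₀ ⊆ B ∧ δ ≤ vol B₀

/-- A `δ`-approximation of the family of periodic boxes of volume at least `ε`. -/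
def PeriodicDeltaApprox {d : ℕ} (δ ε : ℝ) (𝒩 : Set (Set (Fin d → ℝ))) : Prop :=
  (∀ A ∈ 𝒩, IsPeriodicBox A) ∧
  ∀ B : Set (Fin d → ℝ), IsPeriodicBox B → ε ≤ vol B → ∃ B₀ ∈ 𝒩, B₀ ⊆ B ∧ δ ≤ vol B₀


lemma isBox_subset_cube {d : ℕ} {B : Set (Fin d → ℝ)} (h : IsBox B) : B ⊆ cube d := by
  obtain ⟨a, b, hab, rfl⟩ := h
  intro x hx i _
  have hxi := hx i (Set.mem_univ i)
  exact ⟨le_trans (hab i).1 hxi.1, le_trans (le_of_lt hxi.2) (hab i).2.2⟩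

lemma isBox_measurable {d : ℕ} {B : Set (Fin d → ℝ)} (h : IsBox B) : MeasurableSet B := by
  obtain ⟨a, b, _, rfl⟩ := h
  exact MeasurableSet.univ_pi fun i => measurableSet_Ico

lemma volume_cube (d : ℕ) : volume (cube d) = 1 := by
  rw [cube, volume_pi_pi]
  simp [Real.volume_Icc]

lemma exists_good_point {d : ℕ} {δ : ℝ} (hδ : 0 < δ)
    (F : Finset (Set (Fin d → ℝ)))
    (hmeas : ∀ B ∈ F, MeasurableSet B)
    (hsub : ∀ B ∈ F, B ⊆ cube d)
    (hvol : ∀ B ∈ F, ENNReal.ofReal δ ≤ volume B)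
    (hne : F.Nonempty) :
    ∃ x ∈ cube d, δ * F.card ≤ ((F.filter (fun B => x ∈ B)).card : ℝ) := by
  classical
  set c : (Fin d → ℝ) → ℕ := fun x => (F.filter (fun B => x ∈ B)).card with hc
  -- the count function is bounded by F.card
  have hbdd : BddAbove (Set.range c) := by
    refine ⟨F.card, ?_⟩
    rintro n ⟨x, rfl⟩
    exact Finset.card_filter_le _ _
  have hmem : sSup (Set.range c) ∈ Set.range c :=
    Nat.sSup_mem (Set.range_nonempty c) hbdd
  obtain ⟨x₀, hx₀⟩ := hmem
  set m : ℕ := sSup (Set.range c) with hm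
  have hle : ∀ x, c x ≤ m := fun x => le_csSup hbdd ⟨x, rfl⟩
  -- pointwise: sum of indicators equals count
  have hpt : ∀ x, (∑ B ∈ F, B.indicator (fun _ => (1 : ℝ≥0∞)) x) = (c x : ℝ≥0∞) := by
    intro x
    simp only [hc, Finset.card_filter]
    push_cast
    refine Finset.sum_congr rfl fun B _ => ?_
    by_cases h : x ∈ B <;> simp [Set.indicator_apply, h]
  -- integral of the count
  have hint : (∫⁻ x, ∑ B ∈ F, B.indicator (fun _ => (1 : ℝ≥0∞)) x) = ∑ B ∈ F, volume B := by
    rw [MeasureTheory.lintegral_finset_sum _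
      (fun B hB => (measurable_const.indicator (hmeas B hB)))]
    exact Finset.sum_congr rfl fun B hB => MeasureTheory.lintegral_indicator_one (hmeas B hB)
  -- upper bound
  have hub : (∑ B ∈ F, volume B) ≤ (m : ℝ≥0∞) := by
    rw [← hint]
    calc (∫⁻ x, ∑ B ∈ F, B.indicator (fun _ => (1 : ℝ≥0∞)) x)
        ≤ ∫⁻ x, (cube d).indicator (fun _ => (m : ℝ≥0∞)) x := by
          refine MeasureTheory.lintegral_mono fun x => ?_
          rw [hpt x]
          by_cases hx : x ∈ cube d
          · rw [Set.indicator_of_mem hx]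
            exact (Nat.cast_le (α := ℝ≥0∞)).mpr (hle x)
          · have : c x = 0 := by
              rw [hc]
              simp only [Finset.card_eq_zero, Finset.filter_eq_empty_iff]
              intro B hB hxB
              exact hx (hsub B hB hxB)
            rw [this]
            simp
      _ = (m : ℝ≥0∞) * volume (cube d) := by
          rw [MeasureTheory.lintegral_indicator_const]
          exact MeasurableSet.univ_pi fun i => measurableSet_Icc
      _ = (m : ℝ≥0∞) := by rw [volume_cube]; ring
  -- lower bound
  have hlb : ENNReal.ofReal δ * (F.card : ℝ≥0∞) ≤ ∑ B ∈ F, volume B := by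
    calc ENNReal.ofReal δ * (F.card : ℝ≥0∞) = ∑ _B ∈ F, ENNReal.ofReal δ := by
          rw [Finset.sum_const, nsmul_eq_mul, mul_comm]
      _ ≤ ∑ B ∈ F, volume B := Finset.sum_le_sum fun B hB => hvol B hB
  have hkey : ENNReal.ofReal (δ * F.card) ≤ (m : ℝ≥0∞) := by
    rw [ENNReal.ofReal_mul (le_of_lt hδ)]
    simpa using le_trans hlb hub
  have hreal : δ * F.card ≤ (m : ℝ) := by
    have := (ENNReal.ofReal_le_iff_le_toReal (by simp : (m : ℝ≥0∞) ≠ ⊤)).mp hkey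
    simpa using this
  -- x₀ is in the cube
  have hpos : 0 < m := by
    by_contra h
    push_neg at h
    interval_cases m
    have : δ * F.card ≤ 0 := by simpa using hreal
    have : (0:ℝ) < δ * F.card := by
      apply mul_pos hδ
      exact_mod_cast Finset.card_pos.mpr hne
    linarith
  have hcx₀ : 0 < c x₀ := by rw [hx₀]; exact hpos
  obtain ⟨B, hB⟩ := Finset.card_pos.mp hcx₀
  simp only [Finset.mem_filter] at hB
  refine ⟨x₀, hsub B hB.1 hB.2, ?_⟩
  have h2 : (F.filter (fun B => x₀ ∈ B)).card = m := hx₀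
  rw [h2]
  exact hreal

lemma greedy {d : ℕ} {δ : ℝ} (hδ0 : 0 < δ) (hδ1 : δ < 1) :
    ∀ (k : ℕ) (F : Finset (Set (Fin d → ℝ))),
    (∀ B ∈ F, MeasurableSet B) → (∀ B ∈ F, B ⊆ cube d) →
    (∀ B ∈ F, ENNReal.ofReal δ ≤ volume B) →
    ((F.card : ℝ) * (1 - δ) ^ k < 1) →
    ∃ P : Finset (Fin d → ℝ), ↑P ⊆ cube d ∧ P.card ≤ k ∧ ∀ B ∈ F, ∃ p ∈ P, p ∈ B := by
  classical
  intro k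
  induction k with
  | zero =>
    intro F _ _ _ h
    simp only [pow_zero, mul_one] at h
    have : F.card = 0 := by exact_mod_cast Nat.lt_one_iff.mp (by exact_mod_cast h)
    refine ⟨∅, by simp, le_refl 0, ?_⟩
    intro B hB
    simp [Finset.card_eq_zero.mp this] at hB
  | succ k ih =>
    intro F hm hs hv h
    rcases F.eq_empty_or_nonempty with rfl | hne
    · exact ⟨∅, by simp, Nat.zero_le _, by simp⟩
    obtain ⟨x₀, hx₀cube, hx₀⟩ := exists_good_point hδ0 F hm hs hv hne
    set F' := F.filter (fun B => x₀ ∉ B) with hF'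
    have hsplit : (F.filter (fun B => x₀ ∈ B)).card + F'.card = F.card :=
      Finset.card_filter_add_card_filter_not _
    have hcard' : (F'.card : ℝ) ≤ (1 - δ) * F.card := by
      have : (F'.card : ℝ) = F.card - (F.filter (fun B => x₀ ∈ B)).card := by
        have := hsplit
        push_cast [← this]
        ring
      rw [this]
      nlinarith [hx₀]
    have hlt : (F'.card : ℝ) * (1 - δ) ^ k < 1 := by
      have h1δ : (0:ℝ) ≤ 1 - δ := by linarith
      calc (F'.card : ℝ) * (1 - δ) ^ k ≤ ((1 - δ) * F.card) * (1 - δ) ^ k := by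
            apply mul_le_mul_of_nonneg_right hcard' (pow_nonneg h1δ k)
        _ = (F.card : ℝ) * (1 - δ) ^ (k + 1) := by ring
        _ < 1 := h
    obtain ⟨P', hP'cube, hP'card, hP'⟩ := ih F'
      (fun B hB => hm B (Finset.mem_of_mem_filter _ hB))
      (fun B hB => hs B (Finset.mem_of_mem_filter _ hB))
      (fun B hB => hv B (Finset.mem_of_mem_filter _ hB)) hlt
    refine ⟨insert x₀ P', ?_, ?_, ?_⟩
    · intro p hp
      rcases Finset.mem_insert.mp hp with rfl | hp
      · exact hx₀cube
      · exact hP'cube hp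
    · exact le_trans (Finset.card_insert_le _ _) (Nat.succ_le_succ hP'card)
    · intro B hB
      by_cases hx : x₀ ∈ B
      · exact ⟨x₀, Finset.mem_insert_self _ _, hx⟩
      · obtain ⟨p, hp, hpB⟩ := hP' B (Finset.mem_filter.mpr ⟨hB, hx⟩)
        exact ⟨p, Finset.mem_insert_of_mem hp, hpB⟩

/-- Older probabilistic lemma, cube case: if `𝒩` is a finite `δ`-approximation for the boxes
of volume `≥ ε` with `|𝒩| ≥ 3`, then there is a set `P ⊆ [0,1]^d` of cardinality at most
`3 ln|𝒩| / δ` with `disp(P) ≤ ε`. -/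
theorem old_piercing_lemma_cube (d : ℕ) (hd : 1 ≤ d) (δ ε : ℝ)
    (hδ : δ ∈ Set.Ioo (0 : ℝ) 1) (hε : ε ∈ Set.Ioo (0 : ℝ) 1) (hδε : δ ≤ ε)
    (𝒩 : Set (Set (Fin d → ℝ))) (hfin : 𝒩.Finite)
    (happ : DeltaApprox δ ε 𝒩) (hcard : 3 ≤ 𝒩.ncard) :
    ∃ P : Finset (Fin d → ℝ), ↑P ⊆ cube d ∧
      (P.card : ℝ) ≤ 3 * Real.log 𝒩.ncard / δ ∧
      disp (↑P : Set (Fin d → ℝ)) ≤ ε := by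
  classical
  obtain ⟨happ1, happ2⟩ := happ
  obtain ⟨hδ0, hδ1⟩ := hδ
  obtain ⟨hε0, hε1⟩ := hε
  set n := 𝒩.ncard with hn
  have hn3 : (3:ℝ) ≤ (n : ℝ) := by exact_mod_cast hcard
  have hlogn : 1 ≤ Real.log n := by
    rw [Real.le_log_iff_exp_le (by linarith)]
    calc Real.exp 1 ≤ 2.7182818286 := le_of_lt Real.exp_one_lt_d9
      _ ≤ 3 := by norm_num
      _ ≤ (n : ℝ) := hn3
  set F := hfin.toFinset.filter (fun B => δ ≤ vol B) with hF
  have hFmem : ∀ B ∈ F, B ∈ 𝒩 ∧ δ ≤ vol B := by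
    intro B hB
    rw [hF, Finset.mem_filter, Set.Finite.mem_toFinset] at hB
    exact hB
  have hFcard : (F.card : ℝ) ≤ (n : ℝ) := by
    have h1 : F.card ≤ hfin.toFinset.card := Finset.card_filter_le _ _
    have h2 : hfin.toFinset.card = n := by
      rw [hn]
      exact (Set.ncard_eq_toFinset_card 𝒩 hfin).symm
    exact_mod_cast h2 ▸ h1
  set k := ⌈2 * Real.log n / δ⌉₊ with hk
  have h1δ : (0:ℝ) ≤ 1 - δ := by linarith
  have hlt : (F.card : ℝ) * (1 - δ) ^ k < 1 := by
    have hpow : (1 - δ) ^ k ≤ Real.exp (-(δ * k)) := by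
      calc (1 - δ) ^ k ≤ (Real.exp (-δ)) ^ k := by
            apply pow_le_pow_left₀ h1δ
            linarith [Real.add_one_le_exp (-δ)]
        _ = Real.exp (-(δ * k)) := by
            rw [← Real.exp_nat_mul]; ring_nf
    have hδk : Real.log n < δ * k := by
      have hkk : 2 * Real.log n / δ ≤ (k : ℝ) := Nat.le_ceil _
      rw [div_le_iff₀ hδ0] at hkk
      nlinarith
    have hnlt : (n : ℝ) < Real.exp (δ * k) := by
      calc (n : ℝ) = Real.exp (Real.log n) := (Real.exp_log (by linarith)).symm
        _ < Real.exp (δ * k) := Real.exp_lt_exp.mpr hδk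
    calc (F.card : ℝ) * (1 - δ) ^ k ≤ (n : ℝ) * Real.exp (-(δ * k)) := by
          apply mul_le_mul hFcard hpow (pow_nonneg h1δ k) (by linarith)
      _ < 1 := by
          rw [Real.exp_neg, ← div_eq_mul_inv, div_lt_one (Real.exp_pos _)]
          exact hnlt
  obtain ⟨P, hPcube, hPcard, hPhits⟩ := greedy hδ0 hδ1 k F
    (fun B hB => isBox_measurable (happ1 B (hFmem B hB).1))
    (fun B hB => isBox_subset_cube (happ1 B (hFmem B hB).1))
    (fun B hB => by
      have hsub := isBox_subset_cube (happ1 B (hFmem B hB).1)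
      have hfin' : volume B ≠ ⊤ := by
        refine ne_top_of_le_ne_top ?_ (le_trans (measure_mono hsub) (volume_cube d).le)
        simp
      exact ENNReal.ofReal_le_of_le_toReal (hFmem B hB).2)
    hlt
  refine ⟨P, hPcube, ?_, ?_⟩
  · have hceil : (k : ℝ) < 2 * Real.log n / δ + 1 := by
      apply Nat.ceil_lt_add_one
      positivity
    have hone : 1 ≤ Real.log n / δ := by
      rw [le_div_iff₀ hδ0]; nlinarith
    have : (P.card : ℝ) ≤ (k : ℝ) := by exact_mod_cast hPcard
    calc (P.card : ℝ) ≤ (k : ℝ) := this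
      _ ≤ 2 * Real.log n / δ + 1 := le_of_lt hceil
      _ ≤ 2 * Real.log n / δ + Real.log n / δ := by linarith
      _ = 3 * Real.log n / δ := by ring
  · apply Real.sSup_le
    · rintro v ⟨B, hBbox, hBP, rfl⟩
      by_contra hv
      push_neg at hv
      obtain ⟨B₀, hB₀N, hB₀sub, hB₀vol⟩ := happ2 B hBbox (le_of_lt hv)
      have hB₀F : B₀ ∈ F := by
        rw [hF, Finset.mem_filter, Set.Finite.mem_toFinset]
        exact ⟨hB₀N, hB₀vol⟩
      obtain ⟨p, hpP, hpB₀⟩ := hPhits B₀ hB₀F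
      have hmem : p ∈ B ∩ (↑P : Set (Fin d → ℝ)) := ⟨hB₀sub hpB₀, hpP⟩
      rw [hBP] at hmem
      exact hmem
    · linarith
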